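/- arXiv:1702.01273 — 5 statements merged into one kernel-verified Lean document; each statement's English description precedes it below -/
import Mathlib

section
/- For all n ≥ 1, f_m(n) = Σ_{k=1}^{n} c_m(n,k), where f_m is the invert transform of f_{m-1}. -/
/-- The invert transform: `invT g n = g n + ∑_{j=1}^{n-1} g j * invT g (n-j)`. -/
def invT (g : ℕ → ℤ) : ℕ → ℤ
  | n => g n + ∑ j ∈ (Finset.Ico 1 n).attach, g j.1 * invT g (n - j.1)
decreasing_by
  have h := Finset.mem_Ico.mp j.2
  omega

/-- The array `carr g n k = ∑_{i=1}^{n-k+1} g i * carr g (n-i) (k-1)`, with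
`carr g 0 0 = 1` and `carr g n 0 = 0` for `n ≥ 1`. -/
def carr (g : ℕ → ℤ) : ℕ → ℕ → ℤ
  | 0, 0 => 1
  | _ + 1, 0 => 0
  | n, k + 1 => ∑ i ∈ Finset.Icc 1 (n - k), g i * carr g (n - i) k

lemma carr_zero_of_lt (g : ℕ → ℤ) (k m : ℕ) (h : m < k) : carr g m k = 0 := by
  cases k with
  | zero => omega
  | succ k =>
    rw [carr]
    have : m - k = 0 := by omega
    rw [this]
    simp

lemma carr_one (g : ℕ → ℤ) (n : ℕ) (hn : 1 ≤ n) : carr g n 1 = g n := by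
  rw [carr, Nat.sub_zero]
  rw [Finset.sum_eq_single n]
  · have : n - n = 0 := by omega
    rw [this, carr]; ring
  · intro i hi hne
    have hi' := Finset.mem_Icc.mp hi
    have : n - i = (n - i - 1) + 1 := by omega
    rw [this, carr]; ring
  · intro h; exact absurd (Finset.mem_Icc.mpr ⟨hn, le_refl n⟩) h

theorem stmt2 (g : ℕ → ℤ) (n : ℕ) (hn : 1 ≤ n) :
    invT g n = ∑ k ∈ Finset.Icc 1 n, carr g n k := by
  induction n using Nat.strong_induction_on with
  | _ n IH =>
  rw [invT]
  rw [Finset.sum_attach (Finset.Ico 1 n) (fun j => g j * invT g (n - j))]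
  have hIco : Finset.Ico 1 n = Finset.Icc 1 (n - 1) := by
    ext x; simp [Finset.mem_Ico, Finset.mem_Icc]; omega
  rw [hIco]
  -- LHS inner: invT g (n - j) = ∑ k ∈ Icc 1 (n-1), carr g (n-j) k
  have hL : ∀ j ∈ Finset.Icc 1 (n - 1),
      g j * invT g (n - j) = g j * ∑ k ∈ Finset.Icc 1 (n - 1), carr g (n - j) k := by
    intro j hj
    have hj' := Finset.mem_Icc.mp hj
    have h1 : n - j < n := by omega
    have h2 : 1 ≤ n - j := by omega
    rw [IH (n - j) h1 h2]
    congr 1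
    refine Finset.sum_subset (Finset.Icc_subset_Icc_right (by omega)) ?_
    intro k hk hk'
    have hk1 := Finset.mem_Icc.mp hk
    have : n - j < k := by
      by_contra h
      exact hk' (Finset.mem_Icc.mpr ⟨hk1.1, by omega⟩)
    exact carr_zero_of_lt g k (n - j) this
  rw [Finset.sum_congr rfl hL]
  -- RHS: split off k = 1
  have hsplit : Finset.Icc 1 n = insert 1 (Finset.Icc 2 n) := by
    ext x; simp [Finset.mem_Icc, Finset.mem_insert]; omega
  rw [hsplit, Finset.sum_insert (by simp)]
  rw [carr_one g n hn]
  -- reindex Icc 2 n as k'+1 for k' ∈ Icc 1 (n-1)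
  have hmap : Finset.Icc 2 n = (Finset.Icc 1 (n - 1)).map (addRightEmbedding 1) := by
    rw [Finset.map_add_right_Icc]
    congr 1 <;> omega
  rw [hmap, Finset.sum_map]
  simp only [addRightEmbedding_apply]
  -- each term: carr g n (k+1) = ∑ i ∈ Icc 1 (n-1), g i * carr g (n-i) k
  have hR : ∀ k ∈ Finset.Icc 1 (n - 1),
      carr g n (k + 1) = ∑ i ∈ Finset.Icc 1 (n - 1), g i * carr g (n - i) k := by
    intro k hk
    have hk' := Finset.mem_Icc.mp hk
    rw [carr]
    refine Finset.sum_subset (Finset.Icc_subset_Icc_right (by omega)) ?_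
    intro i hi hi'
    have hi1 := Finset.mem_Icc.mp hi
    have : n - i < k := by
      by_contra h
      exact hi' (Finset.mem_Icc.mpr ⟨hi1.1, by omega⟩)
    rw [carr_zero_of_lt g k (n - i) this]; ring
  rw [Finset.sum_congr rfl hR]
  rw [Finset.sum_comm]
  simp only [← Finset.mul_sum]
end

section
/- For all positive integers n and k with 1 ≤ k ≤ n, the binomial identity C(n-1, k-1) = Σ_{j=1}^{k} (-1)^{j+k} · C(k, j) · C(n+j-1, n) holds. -/
open Finset

private lemma diff_step (f : ℕ → ℤ) (k : ℕ) :
    ∑ j ∈ range (k+2), (-1:ℤ)^(k+1+j) * ((k+1).choose j) * f j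
      = ∑ j ∈ range (k+1), (-1:ℤ)^(k+j) * (k.choose j) * (f (j+1) - f j) := by
  rw [Finset.sum_range_succ']
  have h1 : ∀ j ∈ range (k+1), (-1:ℤ)^(k+1+(j+1)) * (((k+1).choose (j+1) : ℤ)) * f (j+1)
      = (-1:ℤ)^(k+j) * (k.choose j) * f (j+1) + (-1:ℤ)^(k+j) * (k.choose (j+1)) * f (j+1) := by
    intro j _
    rw [Nat.choose_succ_succ]
    have hpow : (-1:ℤ)^(k+1+(j+1)) = (-1:ℤ)^(k+j) := by
      have h : k+1+(j+1) = (k+j) + 2 := by ring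
      rw [h, pow_add]; ring
    rw [hpow]
    push_cast
    ring
  rw [Finset.sum_congr rfl h1, Finset.sum_add_distrib]
  have hB : ∑ j ∈ range (k+1), (-1:ℤ)^(k+j) * (k.choose j) * f j
      = ∑ j ∈ range k, (-1:ℤ)^(k+(j+1)) * (k.choose (j+1)) * f (j+1)
        + (-1:ℤ)^(k+0) * (k.choose 0) * f 0 := Finset.sum_range_succ' _ _
  have hC : ∑ j ∈ range (k+1), (-1:ℤ)^(k+j) * (k.choose (j+1)) * f (j+1)
      = ∑ j ∈ range k, (-1:ℤ)^(k+j) * (k.choose (j+1)) * f (j+1) := by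
    rw [Finset.sum_range_succ, Nat.choose_succ_self]
    simp
  have hsub : ∑ j ∈ range (k+1), (-1:ℤ)^(k+j) * (k.choose j) * (f (j+1) - f j)
      = ∑ j ∈ range (k+1), (-1:ℤ)^(k+j) * (k.choose j) * f (j+1)
        - ∑ j ∈ range (k+1), (-1:ℤ)^(k+j) * (k.choose j) * f j := by
    rw [← Finset.sum_sub_distrib]
    exact Finset.sum_congr rfl (fun j _ => by ring)
  rw [hsub, hB, hC]
  have hsigns : ∑ j ∈ range k, (-1:ℤ)^(k+(j+1)) * (k.choose (j+1)) * f (j+1)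
      = - ∑ j ∈ range k, (-1:ℤ)^(k+j) * (k.choose (j+1)) * f (j+1) := by
    rw [← Finset.sum_neg_distrib]
    refine Finset.sum_congr rfl (fun j _ => ?_)
    have h : k + (j+1) = (k+j) + 1 := by ring
    rw [h, pow_succ]; ring
  rw [hsigns]
  simp [pow_succ]
  ring

private lemma lemB : ∀ k s m : ℕ, k ≤ m →
    ∑ j ∈ range (k+1), (-1:ℤ)^(k+j) * (k.choose j) * ((m+s+j).choose m)
      = (m+s).choose (m-k) := by
  intro k
  induction k with
  | zero => intro s m _; simp
  | succ k ih =>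
    intro s m hkm
    have hm1 : 1 ≤ m := le_trans (Nat.succ_le_succ (Nat.zero_le k)) hkm
    rw [show k+1+1 = k+2 from rfl, diff_step (fun j => ((m+s+j).choose m : ℤ)) k]
    have hstep : ∀ j ∈ range (k+1),
        (-1:ℤ)^(k+j) * (k.choose j) * (((m+s+(j+1)).choose m : ℤ) - ((m+s+j).choose m : ℤ))
        = (-1:ℤ)^(k+j) * (k.choose j) * (((m-1)+(s+1)+j).choose (m-1) : ℤ) := by
      intro j _
      have h1 : m + s + (j+1) = (m+s+j) + 1 := by ring
      have h2 : m = (m-1) + 1 := (Nat.succ_pred_eq_of_pos hm1).symm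
      have hp : (m+s+j+1).choose m = (m+s+j).choose (m-1) + (m+s+j).choose m := by
        have h := Nat.choose_succ_succ (m+s+j) (m-1)
        simpa [Nat.succ_eq_add_one, show m-1+1 = m by omega] using h
      have h3 : (m-1)+(s+1)+j = m+s+j := by omega
      rw [h1, hp, h3]
      push_cast
      ring
    rw [Finset.sum_congr rfl hstep, ih (s+1) (m-1) (by omega),
      show (m-1)+(s+1) = m+s by omega, show m-1-k = m-(k+1) by omega]

theorem stmt3 (n k : ℕ) (hk : 1 ≤ k) (hkn : k ≤ n) :
    ((n - 1).choose (k - 1) : ℤ) =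
      ∑ j ∈ Finset.Icc 1 k, (-1 : ℤ) ^ (j + k) * (k.choose j) * ((n + j - 1).choose n) := by
  have hins : Finset.range (k+1) = insert 0 (Finset.Icc 1 k) := by
    ext x
    simp [Finset.mem_range, Finset.mem_Icc, Nat.lt_succ_iff]
    omega
  have hall : ∑ j ∈ Finset.range (k+1), (-1:ℤ)^(k+j) * (k.choose j) * ((n+j-1).choose n)
      = ∑ j ∈ Finset.Icc 1 k, (-1 : ℤ) ^ (j + k) * (k.choose j) * ((n + j - 1).choose n) := by
    rw [hins, Finset.sum_insert (by simp)]
    have h0 : ((n + 0 - 1).choose n : ℤ) = 0 := by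
      norm_num
      exact Nat.choose_eq_zero_of_lt (by omega)
    rw [h0]
    simp only [mul_zero, zero_add]
    exact Finset.sum_congr rfl (fun j _ => by rw [Nat.add_comm k j])
  rw [← hall]
  obtain ⟨K, rfl⟩ : ∃ K, k = K + 1 := ⟨k - 1, by omega⟩
  rw [show K+1+1 = K+2 from rfl, diff_step (fun j => ((n+j-1).choose n : ℤ)) K]
  have hstep : ∀ j ∈ range (K+1),
      (-1:ℤ)^(K+j) * (K.choose j) * (((n+(j+1)-1).choose n : ℤ) - ((n+j-1).choose n : ℤ))
      = (-1:ℤ)^(K+j) * (K.choose j) * (((n-1)+0+j).choose (n-1) : ℤ) := by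
    intro j _
    have h1 : n + (j+1) - 1 = (n+j-1) + 1 := by omega
    have h2 : n = (n-1) + 1 := by omega
    have hp : ((n+j-1)+1).choose n = (n+j-1).choose (n-1) + (n+j-1).choose n := by
      have h := Nat.choose_succ_succ (n+j-1) (n-1)
      simpa [Nat.succ_eq_add_one, show n-1+1 = n by omega] using h
    have h3 : (n-1)+0+j = n+j-1 := by omega
    rw [h1, hp, h3]
    push_cast
    ring
  rw [Finset.sum_congr rfl hstep, lemB K 0 (n-1) (by omega),
    show (n-1)+0 = n-1 by omega, show K+1-1 = K from rfl,
    ← Nat.choose_symm (show K ≤ n-1 by omega)]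
end

section
/- If g : ℕ+ → ℤ and h is its invert transform, and c (resp. d) denotes the k-fold convolution array built from g (resp. h), then for all 1 ≤ k ≤ n, d(n,k) = Σ_{i=k}^{n} C(i-1, k-1) · c(n,i). -/
/-- Compositions of `n` into `k` positive parts. -/
def comps (k n : ℕ) : Finset (Fin k → ℕ) :=
  (Finset.Nat.antidiagonalTuple k n).filter fun f => ∀ i, 0 < f i

/-- The `k`-fold convolution array of `g`:
sum over compositions of `n` into `k` positive parts of the products of values of `g`. -/
def compArr (g : ℕ → ℤ) (n k : ℕ) : ℤ :=
  ∑ f ∈ comps k n, ∏ i, g (f i)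

/-!
Put `G = ∑_{n ≥ 1} g(n) Xⁿ` and let `H` be the same series for the invert transform `h`. Then
`c(n, k)` and `d(n, k)` are the `n`-th coefficients of `Gᵏ` and `Hᵏ`, and the recursion defining `h`
says `H (1 - G) = G`. So `H = φ ∘ G` with `φ = X / (1 - X)`, hence `Hᵏ = φᵏ ∘ G`, where
`φᵏ = ∑_{i ≥ k} C(i - 1, k - 1) Xⁱ`. As `Gⁱ` has order at least `i`, only the terms with `i ≤ n`
contribute to the `n`-th coefficient.
-/

open PowerSeries Finset

namespace PowerSeries

variable {R : Type*} [CommRing R]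

theorem coeff_pow_eq_zero_of_lt {a : R⟦X⟧} (ha : constantCoeff a = 0) {n d : ℕ} (h : n < d) :
    coeff n (a ^ d) = 0 :=
  (X_pow_dvd_iff.mp (pow_dvd_pow_of_dvd (X_dvd_iff.mpr ha) d)) n h

theorem coeff_subst_eq_sum_range {a : R⟦X⟧} (ha : constantCoeff a = 0) (f : R⟦X⟧) (n : ℕ) :
    coeff n (subst a f) = ∑ d ∈ range (n + 1), coeff d f * coeff n (a ^ d) := by
  rw [coeff_subst' (HasSubst.of_constantCoeff_zero' ha)]
  refine finsum_eq_sum_of_support_subset _ fun d hd => ?_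
  rw [mem_coe, mem_range]
  by_contra! h
  exact hd (by simp only [smul_eq_mul, coeff_pow_eq_zero_of_lt ha (by omega : n < d), mul_zero])

theorem coeff_X_mul_mk_one_pow (m i : ℕ) :
    coeff i ((X * mk 1 : R⟦X⟧) ^ (m + 1)) = if m + 1 ≤ i then ((i - 1).choose m : R) else 0 := by
  rw [mul_pow, mk_one_pow_eq_mk_choose_add, coeff_X_pow_mul', coeff_mk]
  split_ifs
  · rw [show m + (i - (m + 1)) = i - 1 by omega]
  · rfl

theorem eq_subst_X_mul_mk_one_of_mul_one_sub_eq {a b : R⟦X⟧} (ha : constantCoeff a = 0)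
    (h : b * (1 - a) = a) : b = subst a (X * mk 1 : R⟦X⟧) := by
  have hs := HasSubst.of_constantCoeff_zero' ha
  have hunit : IsUnit (1 - a) := isUnit_iff_constantCoeff.mpr (by simp [ha])
  refine hunit.mul_left_inj.mp ?_
  rw [h, ← coe_substAlgHom hs]
  calc a = substAlgHom hs (X * (mk 1 * (1 - X)) : R⟦X⟧) := by
          rw [mk_one_mul_one_sub_eq_one, mul_one, substAlgHom_X]
    _ = _ := by rw [← mul_assoc, map_mul, map_sub, map_one, substAlgHom_X]

theorem coeff_pow_of_mul_one_sub_eq {a b : R⟦X⟧} (ha : constantCoeff a = 0) (h : b * (1 - a) = a)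
    (m n : ℕ) :
    coeff n (b ^ (m + 1)) = ∑ i ∈ Icc (m + 1) n, ((i - 1).choose m : R) * coeff n (a ^ i) := by
  rw [eq_subst_X_mul_mk_one_of_mul_one_sub_eq ha h,
    ← subst_pow (HasSubst.of_constantCoeff_zero' ha), coeff_subst_eq_sum_range ha]
  simp only [coeff_X_mul_mk_one_pow, ite_mul, zero_mul, ← sum_filter]
  congr 1
  ext i
  simp only [mem_filter, mem_range, mem_Icc]
  omega

end PowerSeries

theorem invT_eq (g : ℕ → ℤ) (n : ℕ) :
    invT g n = g n + ∑ j ∈ Ico 1 n, g j * invT g (n - j) := by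
  rw [invT, sum_attach (Ico 1 n) fun j => g j * invT g (n - j)]

theorem mem_comps {k n : ℕ} {f : Fin k → ℕ} :
    f ∈ comps k n ↔ ∑ i, f i = n ∧ ∀ i, 0 < f i := by
  simp [comps, Finset.Nat.mem_antidiagonalTuple]

theorem compArr_zero (u : ℕ → ℤ) (n : ℕ) : compArr u n 0 = if n = 0 then 1 else 0 := by
  have hcomps : comps 0 n = if n = 0 then {![]} else ∅ := by
    ext f
    split_ifs <;> simp [mem_comps, Subsingleton.elim f ![]] <;> omega
  rw [compArr, hcomps]
  split_ifs <;> simp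

theorem compArr_succ (u : ℕ → ℤ) (n k : ℕ) :
    compArr u n (k + 1) = ∑ j ∈ Icc 1 n, u j * compArr u (n - j) k := by
  simp only [compArr, mul_sum]
  rw [sum_sigma']
  refine sum_nbij' (fun f => ⟨f 0, Fin.tail f⟩) (fun p => Fin.cons p.1 p.2) ?_ ?_ ?_ ?_ ?_
  · intro f hf
    obtain ⟨hsum, hpos⟩ := mem_comps.mp hf
    rw [Fin.sum_univ_succ] at hsum
    simp only [mem_sigma, mem_Icc, mem_comps]
    exact ⟨⟨hpos 0, by omega⟩, by simp only [Fin.tail]; omega, fun i => hpos i.succ⟩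
  · rintro ⟨j, f⟩ hp
    simp only [mem_sigma, mem_Icc, mem_comps] at hp
    obtain ⟨⟨hj, hjn⟩, hsum, hpos⟩ := hp
    refine mem_comps.mpr ⟨?_, Fin.cases hj hpos⟩
    rw [Fin.sum_univ_succ]
    simp only [Fin.cons_zero, Fin.cons_succ, hsum]
    omega
  · intro f _
    exact Fin.cons_self_tail f
  · rintro ⟨j, f⟩ _
    simp
  · intro f _
    rw [Fin.prod_univ_succ]
    rfl

-- `u 0` never enters `compArr`; dropping it makes `genFun u` substitutable (constant term `0`).
def genFun (u : ℕ → ℤ) : ℤ⟦X⟧ :=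
  mk fun n => if n = 0 then 0 else u n

theorem coeff_genFun (u : ℕ → ℤ) (n : ℕ) : coeff n (genFun u) = if n = 0 then 0 else u n :=
  coeff_mk _ _

theorem constantCoeff_genFun (u : ℕ → ℤ) : constantCoeff (genFun u) = 0 := by
  simp [genFun]

theorem coeff_genFun_mul (u : ℕ → ℤ) (f : ℤ⟦X⟧) (n : ℕ) :
    coeff n (genFun u * f) = ∑ j ∈ Icc 1 n, u j * coeff (n - j) f := by
  rw [coeff_mul, Nat.sum_antidiagonal_eq_sum_range_succ fun i j => coeff i (genFun u) * coeff j f]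
  have hu : ∀ j ∈ Icc 1 n, u j * coeff (n - j) f = coeff j (genFun u) * coeff (n - j) f := by
    intro j hj
    rw [coeff_genFun, if_neg (by simp at hj; omega)]
  rw [sum_congr rfl hu]
  refine (sum_subset (fun j hj => ?_) fun j hj hj' => ?_).symm
  · simp only [mem_Icc, mem_range] at hj ⊢
    omega
  · simp only [mem_Icc, mem_range] at hj hj'
    rw [show j = 0 by omega, coeff_genFun, if_pos rfl, zero_mul]

theorem compArr_eq_coeff_genFun_pow (u : ℕ → ℤ) (n k : ℕ) :
    compArr u n k = coeff n (genFun u ^ k) := by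
  induction k generalizing n with
  | zero => rw [compArr_zero, pow_zero, coeff_one]
  | succ k ih => simp only [compArr_succ, pow_succ', coeff_genFun_mul, ih]

theorem genFun_invT_mul_one_sub (g : ℕ → ℤ) : genFun (invT g) * (1 - genFun g) = genFun g := by
  rw [mul_one_sub, sub_eq_iff_eq_add, mul_comm]
  ext n
  rcases n with _ | n
  · simp [constantCoeff_genFun]
  rw [map_add, coeff_genFun_mul, sum_Icc_succ_top (by omega), Nat.sub_self]
  simp only [coeff_genFun, Nat.add_one_ne_zero, if_true, if_false, mul_zero, add_zero]
  rw [invT_eq g (n + 1), Ico_add_one_right_eq_Icc]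
  congr 1
  refine sum_congr rfl fun j hj => ?_
  rw [if_neg (by simp at hj; omega)]

theorem stmt4_general (g : ℕ → ℤ) (n k : ℕ) (hk : 1 ≤ k) :
    compArr (invT g) n k =
      ∑ i ∈ Finset.Icc k n, ((i - 1).choose (k - 1) : ℤ) * compArr g n i := by
  obtain ⟨m, rfl⟩ : ∃ m, k = m + 1 := ⟨k - 1, by omega⟩
  simp only [compArr_eq_coeff_genFun_pow, Nat.add_sub_cancel,
    coeff_pow_of_mul_one_sub_eq (constantCoeff_genFun g) (genFun_invT_mul_one_sub g)]

theorem stmt4 (g : ℕ → ℤ) (n k : ℕ) (hk : 1 ≤ k) (hkn : k ≤ n) :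
    compArr (invT g) n k =
      ∑ i ∈ Finset.Icc k n, ((i - 1).choose (k - 1) : ℤ) * compArr g n i :=
  stmt4_general g n k hk
end

section
/- The number of binary words of length n-1 containing exactly k-1 ones and avoiding runs of zeros of odd length equals C((n-k)/2 + k - 1, k-1) when n ≡ k (mod 2), and equals 0 otherwise. -/
/-- Extend a word of length `N` by `true` (i.e. the letter 1) outside its domain. -/
def pad {N : ℕ} (w : Fin N → Bool) (j : ℕ) : Bool :=
  if h : j < N then w ⟨j, h⟩ else true

/-- Every maximal run of zeros (`false`) in the word `w` has even length. -/
def evenZeroRuns {N : ℕ} (w : Fin N → Bool) : Prop :=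
  ∀ i l : ℕ, 0 < l → (∀ j < l, pad w (i + j) = false) →
    (i = 0 ∨ pad w (i - 1) = true) → pad w (i + l) = true → Even l

lemma pad_cons_zero {N : ℕ} (b : Bool) (w : Fin N → Bool) : pad (Fin.cons b w) 0 = b := by
  simp [pad]

lemma pad_cons_succ {N : ℕ} (b : Bool) (w : Fin N → Bool) (j : ℕ) :
    pad (Fin.cons b w) (j + 1) = pad w j := by
  simp only [pad]
  by_cases h : j < N
  · rw [dif_pos (by omega : j + 1 < N + 1), dif_pos h]
    exact congrArg _ rfl
  · rw [dif_neg (by omega), dif_neg h]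

lemma pad_cons {N : ℕ} (b : Bool) (w : Fin N → Bool) (j : ℕ) :
    pad (Fin.cons b w) j = if j = 0 then b else pad w (j - 1) := by
  cases j with
  | zero => simp [pad_cons_zero]
  | succ j => simp [pad_cons_succ]

lemma ezr_zero (w : Fin 0 → Bool) : evenZeroRuns w := by
  intro i l hl hrun _ _
  have := hrun 0 hl
  simp [pad] at this

lemma ezr_cons_true {N : ℕ} (w : Fin N → Bool) :
    evenZeroRuns (Fin.cons true w) ↔ evenZeroRuns w := by
  constructor
  · intro H i l hl hrun hleft hright
    apply H (i + 1) l hl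
    · intro j hj
      rw [show i + 1 + j = (i + j) + 1 by ring, pad_cons_succ]
      exact hrun j hj
    · rcases hleft with h | h
      · subst h; right; simpa using pad_cons_zero true w
      · right
        rcases Nat.eq_zero_or_pos i with h0 | h0
        · subst h0; simpa using pad_cons_zero true w
        · rw [show i + 1 - 1 = (i - 1) + 1 by omega, pad_cons_succ]; exact h
    · rw [show i + 1 + l = (i + l) + 1 by ring, pad_cons_succ]; exact hright
  · intro H i l hl hrun hleft hright
    rcases Nat.eq_zero_or_pos i with h0 | h0
    · subst h0
      have := hrun 0 hl
      rw [pad_cons_zero] at this; simp at this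
    · apply H (i - 1) l hl
      · intro j hj
        have := hrun j hj
        rw [show i + j = (i - 1 + j) + 1 by omega, pad_cons_succ] at this
        exact this
      · rcases Nat.eq_or_lt_of_le h0 with h1 | h1
        · left; omega
        · right
          rcases hleft with h | h
          · omega
          · rw [show i - 1 = (i - 1 - 1) + 1 by omega, pad_cons_succ] at h
            exact h
      · rw [show i + l = (i - 1 + l) + 1 by omega, pad_cons_succ] at hright
        exact hright

lemma ezr_cons_false_false {N : ℕ} (w : Fin N → Bool) :
    evenZeroRuns (Fin.cons false (Fin.cons false w)) ↔ evenZeroRuns w := by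
  constructor
  · intro H i l hl hrun hleft hright
    rcases Nat.eq_zero_or_pos i with h0 | h0
    · subst h0
      have key := H 0 (l + 2) (by omega) ?_ (Or.inl rfl) ?_
      · rcases key with ⟨m, hm⟩; exact ⟨m - 1, by omega⟩
      · intro j hj
        match j, hj with
        | 0, _ => simpa using pad_cons_zero false _
        | 1, _ => simp [pad_cons]
        | (j + 2), hj =>
          rw [show 0 + (j + 2) = (0 + j) + 1 + 1 by omega, pad_cons_succ, pad_cons_succ]
          exact hrun j (by omega)
      · rw [show 0 + (l + 2) = (0 + l) + 1 + 1 by omega, pad_cons_succ, pad_cons_succ]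
        exact hright
    · apply H (i + 2) l hl
      · intro j hj
        rw [show i + 2 + j = (i + j) + 1 + 1 by ring, pad_cons_succ, pad_cons_succ]
        exact hrun j hj
      · right
        rw [show i + 2 - 1 = (i - 1) + 1 + 1 by omega, pad_cons_succ, pad_cons_succ]
        rcases hleft with h | h
        · omega
        · exact h
      · rw [show i + 2 + l = (i + l) + 1 + 1 by ring, pad_cons_succ, pad_cons_succ]
        exact hright
  · intro H i l hl hrun hleft hright
    match i, hleft with
    | 0, _ =>
      -- run starts at 0; positions 0,1 are false
      rcases Nat.lt_or_ge l 2 with h2 | h2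
      · interval_cases l
        · exact absurd hright (by rw [show (0:ℕ) + 1 = 0 + 1 from rfl, pad_cons_succ]; simp [pad_cons_zero])
      · rcases Nat.eq_or_lt_of_le h2 with h22 | h22
        · exact ⟨1, by omega⟩
        · have key := H 0 (l - 2) (by omega) ?_ (Or.inl rfl) ?_
          · rcases key with ⟨m, hm⟩; exact ⟨m + 1, by omega⟩
          · intro j hj
            have := hrun (j + 2) (by omega)
            rw [show 0 + (j + 2) = (0 + j) + 1 + 1 by omega, pad_cons_succ, pad_cons_succ] at this
            exact this
          · rw [show 0 + (l - 2) = (0 + l) - 1 - 1 by omega] at *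
            have := hright
            rw [show 0 + l = ((0 + l) - 1 - 1) + 1 + 1 by omega, pad_cons_succ, pad_cons_succ] at this
            exact this
    | 1, hleft =>
      rcases hleft with h | h
      · omega
      · rw [show (1:ℕ) - 1 = 0 from rfl, pad_cons_zero] at h; simp at h
    | 2, hleft =>
      rcases hleft with h | h
      · omega
      · rw [show (2:ℕ) - 1 = 0 + 1 by rfl, pad_cons_succ, pad_cons_zero] at h; simp at h
    | (i + 3), hleft =>
      apply H (i + 1) l hl
      · intro j hj
        have := hrun j hj
        rw [show i + 3 + j = (i + 1 + j) + 1 + 1 by ring, pad_cons_succ, pad_cons_succ] at this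
        exact this
      · right
        rcases hleft with h | h
        · omega
        · rw [show i + 3 - 1 = (i + 1 - 1) + 1 + 1 by omega, pad_cons_succ, pad_cons_succ] at h
          exact h
      · rw [show i + 3 + l = (i + 1 + l) + 1 + 1 by ring, pad_cons_succ, pad_cons_succ] at hright
        exact hright

lemma not_ezr_single_false {N : ℕ} (w : Fin N → Bool)
    (h0 : pad w 0 = false) (h1 : pad w 1 = true) : ¬ evenZeroRuns w := by
  intro H
  have := H 0 1 one_pos (by intro j hj; interval_cases j; simpa using h0) (Or.inl rfl)
    (by simpa using h1)
  simp [Nat.even_iff] at this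

open Classical

noncomputable def ones {N : ℕ} (w : Fin N → Bool) : ℕ :=
  (Finset.univ.filter fun i => w i = true).card

noncomputable def F (N j : ℕ) : ℕ :=
  (Finset.univ.filter fun w : Fin N → Bool =>
    evenZeroRuns w ∧ ones w = j).card

lemma ones_cons {N : ℕ} (b : Bool) (w : Fin N → Bool) :
    ones (Fin.cons b w) = (if b = true then 1 else 0) + ones w := by
  unfold ones
  rw [Finset.card_filter, Finset.card_filter, Fin.sum_univ_succ]
  simp [Fin.cons_zero, Fin.cons_succ]

lemma card_filter_cons (N : ℕ) (P : (Fin (N + 1) → Bool) → Prop) [DecidablePred P]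
    [DecidablePred fun w : Fin N → Bool => P (Fin.cons true w)]
    [DecidablePred fun w : Fin N → Bool => P (Fin.cons false w)] :
    (Finset.univ.filter P).card =
      (Finset.univ.filter fun w : Fin N → Bool => P (Fin.cons true w)).card +
      (Finset.univ.filter fun w : Fin N → Bool => P (Fin.cons false w)).card := by
  rw [Finset.card_filter, Finset.card_filter, Finset.card_filter,
    ← Equiv.sum_comp (Fin.consEquiv fun _ => Bool) (fun w => if P w then 1 else 0),
    Fintype.sum_prod_type, Fintype.sum_bool]
  congr 1 <;> apply Finset.sum_congr rfl <;> intro w _ <;>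
    simp [Fin.consEquiv] <;> congr 1

lemma F_zero (j : ℕ) : F 0 j = if j = 0 then 1 else 0 := by
  unfold F
  have h : ∀ w : Fin 0 → Bool, (evenZeroRuns w ∧ ones w = j) ↔ (0 = j) := by
    intro w
    simp [ezr_zero w, ones]
  rw [Finset.filter_congr (fun w _ => h w)]
  by_cases hj : j = 0
  · subst hj
    simp
  · rw [Finset.filter_false_of_mem (fun w _ => by omega)]
    simp [hj]

lemma G_false_eq (N j : ℕ) :
    (Finset.univ.filter fun w : Fin N → Bool =>
      evenZeroRuns (Fin.cons false w) ∧ ones (Fin.cons false w) = j).card =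
    if 2 ≤ N + 1 then F (N - 1) j else 0 := by
  match N with
  | 0 =>
    rw [Finset.filter_false_of_mem, if_neg (by omega)]
    · simp
    · intro w _ hw
      exact not_ezr_single_false _ (pad_cons_zero false w)
        (by rw [pad_cons_succ]; simp [pad]) hw.1
  | M + 1 =>
    rw [if_pos (by omega)]
    rw [card_filter_cons M (fun w : Fin (M + 1) → Bool =>
      evenZeroRuns (Fin.cons false w) ∧ ones (Fin.cons false w) = j)]
    have h1 : (Finset.univ.filter fun v : Fin M → Bool =>
        evenZeroRuns (Fin.cons false (Fin.cons true v)) ∧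
          ones (Fin.cons false (Fin.cons true v)) = j).card = 0 := by
      rw [Finset.card_eq_zero]
      apply Finset.filter_false_of_mem
      intro v _ hv
      exact absurd hv.1 (not_ezr_single_false _ (pad_cons_zero false _)
        (by rw [pad_cons_succ, pad_cons_zero]))
    rw [h1]
    rw [Nat.zero_add]
    show _ = F M j
    unfold F
    apply Finset.card_bij (fun v _ => v) <;> intro v hv
    · simp only [Finset.mem_filter, Finset.mem_univ, true_and] at hv ⊢
      rw [ezr_cons_false_false, ones_cons, ones_cons] at hv
      simpa using hv
    · intro v' hv' h; exact h
    · refine ⟨v, ?_, rfl⟩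
      simp only [Finset.mem_filter, Finset.mem_univ, true_and] at hv ⊢
      rw [ezr_cons_false_false, ones_cons, ones_cons]
      simpa using hv

lemma F_succ (N j : ℕ) :
    F (N + 1) j = (if 1 ≤ j then F N (j - 1) else 0) +
      (if 2 ≤ N + 1 then F (N - 1) j else 0) := by
  unfold F
  rw [card_filter_cons N (fun w : Fin (N + 1) → Bool => evenZeroRuns w ∧ ones w = j)]
  congr 1
  · by_cases hj : 1 ≤ j
    · rw [if_pos hj]
      show _ = F N (j - 1)
      unfold F
      apply Finset.card_bij (fun v _ => v) <;> intro v hv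
      · simp only [Finset.mem_filter, Finset.mem_univ, true_and] at hv ⊢
        rw [ezr_cons_true, ones_cons] at hv
        obtain ⟨h1, h2⟩ := hv
        norm_num at h2
        exact ⟨h1, by omega⟩
      · intro v' hv' h; exact h
      · refine ⟨v, ?_, rfl⟩
        simp only [Finset.mem_filter, Finset.mem_univ, true_and] at hv ⊢
        rw [ezr_cons_true, ones_cons]
        refine ⟨hv.1, ?_⟩
        norm_num
        omega
    · rw [if_neg hj]
      rw [Finset.card_eq_zero]
      apply Finset.filter_false_of_mem
      intro v _ hv
      rw [ones_cons] at hv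
      simp at hv
      omega
  · exact G_false_eq N j

lemma key_arith (M i : ℕ) :
    (if i ≤ M + 1 ∧ (M + 1) % 2 = i % 2 then ((M + 1 - i) / 2 + i).choose i else 0) +
    (if i + 1 ≤ M ∧ M % 2 = (i + 1) % 2 then ((M - (i + 1)) / 2 + (i + 1)).choose (i + 1) else 0) =
    if i + 1 ≤ M + 2 ∧ (M + 2) % 2 = (i + 1) % 2 then
      ((M + 2 - (i + 1)) / 2 + (i + 1)).choose (i + 1) else 0 := by
  by_cases hC3 : i + 1 ≤ M + 2 ∧ (M + 2) % 2 = (i + 1) % 2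
  · rw [if_pos hC3]
    by_cases hle : i + 1 ≤ M
    · obtain ⟨a, ha⟩ : ∃ a, M - (i + 1) = 2 * a := ⟨(M - (i + 1)) / 2, by omega⟩
      rw [if_pos ⟨by omega, by omega⟩, if_pos ⟨hle, by omega⟩]
      have e1 : (M + 1 - i) / 2 + i = a + i + 1 := by omega
      have e2 : (M - (i + 1)) / 2 + (i + 1) = a + i + 1 := by omega
      have e3 : (M + 2 - (i + 1)) / 2 + (i + 1) = a + i + 2 := by omega
      rw [e1, e2, e3]
      exact (Nat.choose_succ_succ (a + i + 1) i).symm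
    · have hi : i = M + 1 := by omega
      subst hi
      rw [if_pos ⟨by omega, by omega⟩, if_neg (by omega)]
      have e1 : (M + 1 - (M + 1)) / 2 + (M + 1) = M + 1 := by omega
      have e3 : (M + 2 - (M + 1 + 1)) / 2 + (M + 1 + 1) = M + 2 := by omega
      rw [e1, e3, Nat.choose_self, Nat.choose_self]
  · rw [if_neg hC3, if_neg (fun h => hC3 ⟨by omega, by omega⟩),
      if_neg (fun h => hC3 ⟨by omega, by omega⟩)]

theorem F_one (j : ℕ) : F 1 j = if j = 1 then 1 else 0 := by
  have h := F_succ 0 j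
  rw [if_neg (by omega : ¬ 2 ≤ 0 + 1)] at h
  rw [h]
  match j with
  | 0 => rw [if_neg (by omega : ¬ (1:ℕ) ≤ 0), if_neg (by omega : ¬ (0:ℕ) = 1)]
  | 1 => rw [if_pos (by omega : (1:ℕ) ≤ 1), F_zero, if_pos rfl, if_pos rfl]
  | (j + 2) =>
    rw [if_pos (by omega : (1:ℕ) ≤ j + 2), F_zero,
      if_neg (by omega : ¬ j + 2 - 1 = 0), if_neg (by omega : ¬ j + 2 = 1)]

theorem F_two_step (M j : ℕ) : F (M + 2) j =
    (if 1 ≤ j then F (M + 1) (j - 1) else 0) + F M j := by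
  have h := F_succ (M + 1) j
  rw [if_pos (by omega : 2 ≤ M + 1 + 1)] at h
  exact h

theorem F_eq (N : ℕ) : ∀ j, F N j =
    if j ≤ N ∧ N % 2 = j % 2 then ((N - j) / 2 + j).choose j else 0 := by
  induction N using Nat.strong_induction_on with
  | _ N ih =>
    match N with
    | 0 =>
      intro j
      rw [F_zero]
      match j with
      | 0 => simp
      | (j + 1) =>
        rw [if_neg (by omega : ¬ j + 1 = 0),
          if_neg (by omega : ¬ (j + 1 ≤ 0 ∧ 0 % 2 = (j + 1) % 2))]
    | 1 =>
      intro j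
      rw [F_one]
      match j with
      | 0 => rw [if_neg (by omega : ¬ (0:ℕ) = 1),
          if_neg (by omega : ¬ ((0:ℕ) ≤ 1 ∧ 1 % 2 = 0 % 2))]
      | 1 =>
        rw [if_pos rfl, if_pos (by omega : (1:ℕ) ≤ 1 ∧ 1 % 2 = 1 % 2)]
        simp
      | (j + 2) =>
        rw [if_neg (by omega : ¬ j + 2 = 1),
          if_neg (by omega : ¬ (j + 2 ≤ 1 ∧ 1 % 2 = (j + 2) % 2))]
    | (M + 2) =>
      intro j
      rw [F_two_step, ih (M + 1) (by omega), ih M (by omega)]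
      match j with
      | 0 =>
        rw [if_neg (by omega : ¬ (1:ℕ) ≤ 0)]
        simp only [Nat.choose_zero_right]
        split_ifs <;> omega
      | (i + 1) =>
        rw [if_pos (by omega : (1:ℕ) ≤ i + 1), Nat.add_sub_cancel]
        exact key_arith M i

open Classical in
theorem stmt11 (n k : ℕ) (hk : 1 ≤ k) (hkn : k ≤ n) :
    (Finset.univ.filter fun w : Fin (n - 1) → Bool =>
        evenZeroRuns w ∧ (Finset.univ.filter fun i => w i = true).card = k - 1).card =
      if n % 2 = k % 2 then ((n - k) / 2 + k - 1).choose (k - 1) else 0 := by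
  show F (n - 1) (k - 1) = _
  rw [F_eq]
  by_cases h : n % 2 = k % 2
  · rw [if_pos (by omega : k - 1 ≤ n - 1 ∧ (n - 1) % 2 = (k - 1) % 2), if_pos h]
    congr 1
    omega
  · rw [if_neg (by omega : ¬ (k - 1 ≤ n - 1 ∧ (n - 1) % 2 = (k - 1) % 2)), if_neg h]
end

section
/- The number of ternary words of length n-1 over {0,1,2} containing exactly k-1 letters equal to 2 and avoiding the factor 01 (among the letters) equals C(n+k-1, 2k-1); equivalently, it equals the number of binary words of length n+k-1 with exactly 2k-1 zeros. -/
open Finset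

def Avoid {m : ℕ} (w : Fin m → Fin 3) : Prop :=
  ∀ i : ℕ, (h : i + 1 < m) → ¬ (w ⟨i, by omega⟩ = 0 ∧ w ⟨i + 1, h⟩ = 1)

lemma cons_mk_succ {α : Type} {m : ℕ} (a : α) (v : Fin m → α) (i : ℕ) (h : i < m)
    (h' : i + 1 < m + 1) : (Fin.cons a v : Fin (m+1) → α) ⟨i + 1, h'⟩ = v ⟨i, h⟩ := by
  rw [show (⟨i + 1, h'⟩ : Fin (m+1)) = Fin.succ ⟨i, h⟩ from rfl]
  exact Fin.cons_succ (α := fun _ => α) a v ⟨i, h⟩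

lemma cons_mk_zero {α : Type} {m : ℕ} (a : α) (v : Fin m → α) (h : 0 < m + 1) :
    (Fin.cons a v : Fin (m+1) → α) ⟨0, h⟩ = a := by
  rw [show (⟨0, h⟩ : Fin (m+1)) = 0 from rfl]
  exact Fin.cons_zero (α := fun _ => α) a v

lemma avoid_cons {m : ℕ} (a : Fin 3) (v : Fin m → Fin 3) :
    Avoid (Fin.cons a v) ↔ Avoid v ∧ ∀ (h : 0 < m), ¬ (a = 0 ∧ v ⟨0, h⟩ = 1) := by
  constructor
  · intro H
    refine ⟨fun i h => ?_, fun h => ?_⟩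
    · have := H (i+1) (by omega)
      rwa [cons_mk_succ a v i (by omega), cons_mk_succ a v (i+1) h] at this
    · have := H 0 (by omega)
      rwa [cons_mk_zero, cons_mk_succ a v 0 h] at this
  · rintro ⟨H1, H2⟩ i h
    match i, h with
    | 0, h =>
      have := H2 (by omega)
      rwa [cons_mk_zero, cons_mk_succ a v 0 (by omega)]
    | i+1, h =>
      have := H1 i (by omega)
      rwa [cons_mk_succ a v i (by omega), cons_mk_succ a v (i+1) (by omega)]

open Classical in
noncomputable def cnt {m : ℕ} (w : Fin m → Fin 3) : ℕ :=
  (univ.filter fun i => w i = 2).card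

lemma cnt_cons {m : ℕ} (a : Fin 3) (v : Fin m → Fin 3) :
    cnt (Fin.cons a v) = (if a = 2 then 1 else 0) + cnt v := by
  classical
  simp only [cnt, Finset.card_filter, Fin.sum_univ_succ, Fin.cons_zero, Fin.cons_succ]

open Classical in
lemma card_succ {α : Type} [Fintype α] {m : ℕ} (Q : (Fin (m+1) → α) → Prop)
    [DecidablePred Q] :
    (univ.filter Q).card = ∑ a : α, ∑ v : Fin m → α, if Q (Fin.cons a v) then 1 else 0 := by
  rw [Finset.card_filter]
  rw [← Equiv.sum_comp (Fin.consEquiv (fun _ => α)) (fun w => if Q w then 1 else 0)]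
  rw [Fintype.sum_prod_type]
  rfl

lemma sum_indicator_congr {β : Type} [Fintype β] {P P' : β → Prop}
    [DecidablePred P] [DecidablePred P']
    (h : ∀ b, P b ↔ P' b) :
    (∑ b : β, if P b then 1 else 0) = ∑ b : β, if P' b then 1 else 0 :=
  Finset.sum_congr rfl (fun b _ => if_congr (h b) rfl rfl)

open Classical in
noncomputable def f (m t : ℕ) : ℕ :=
  (univ.filter fun w : Fin m → Fin 3 => Avoid w ∧ cnt w = t).card

open Classical in
noncomputable def g (m t : ℕ) : ℕ :=
  (univ.filter fun w : Fin m → Fin 3 =>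
    (Avoid w ∧ cnt w = t) ∧ ∀ h : 0 < m, w ⟨0, h⟩ ≠ 1).card

open Classical in
lemma f_sum (m t : ℕ) :
    f m t = ∑ v : Fin m → Fin 3, if Avoid v ∧ cnt v = t then 1 else 0 := by
  rw [f, Finset.card_filter]

open Classical in
lemma g_sum (m t : ℕ) :
    g m t = ∑ v : Fin m → Fin 3,
      if (Avoid v ∧ cnt v = t) ∧ ∀ h : 0 < m, v ⟨0, h⟩ ≠ 1 then 1 else 0 := by
  rw [g, Finset.card_filter]

lemma f_zero (t : ℕ) : f 0 t = if t = 0 then 1 else 0 := by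
  classical
  have hA : ∀ w : Fin 0 → Fin 3, Avoid w := fun w i h => absurd h (by omega)
  have hC : ∀ w : Fin 0 → Fin 3, cnt w = 0 := fun w => by simp [cnt]
  rw [f_sum]
  rw [sum_indicator_congr (P' := fun _ : Fin 0 → Fin 3 => t = 0)
    (fun v => by simp [hA v, hC v, eq_comm])]
  simp [Finset.card_univ]

lemma g_zero (t : ℕ) : g 0 t = if t = 0 then 1 else 0 := by
  classical
  have hA : ∀ w : Fin 0 → Fin 3, Avoid w := fun w i h => absurd h (by omega)
  have hC : ∀ w : Fin 0 → Fin 3, cnt w = 0 := fun w => by simp [cnt]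
  rw [g_sum]
  rw [sum_indicator_congr (P' := fun _ : Fin 0 → Fin 3 => t = 0)
    (fun v => by simp [hA v, hC v, eq_comm])]
  simp [Finset.card_univ]

open Classical in
lemma f_succ (m t : ℕ) :
    f (m+1) t = g m t + f m t + (if t = 0 then 0 else f m (t-1)) := by
  have e0 : ¬ ((0:Fin 3) = 2) := by decide
  have e1 : ¬ ((1:Fin 3) = 2) := by decide
  have n10 : ¬ ((1:Fin 3) = 0) := by decide
  have n20 : ¬ ((2:Fin 3) = 0) := by decide
  rw [f, card_succ, Fin.sum_univ_three]
  have h0 : (∑ v : Fin m → Fin 3,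
      if Avoid (Fin.cons 0 v) ∧ cnt (Fin.cons 0 v) = t then 1 else 0) = g m t := by
    rw [g_sum]
    refine sum_indicator_congr (fun v => ?_)
    rw [avoid_cons, cnt_cons, if_neg e0]
    constructor
    · rintro ⟨⟨hv, hs⟩, hc⟩; exact ⟨⟨hv, by omega⟩, fun h h1 => hs h ⟨by trivial, h1⟩⟩
    · rintro ⟨⟨hv, hc⟩, hs⟩; exact ⟨⟨hv, fun h hp => hs h hp.2⟩, by omega⟩
  have h1 : (∑ v : Fin m → Fin 3,
      if Avoid (Fin.cons 1 v) ∧ cnt (Fin.cons 1 v) = t then 1 else 0) = f m t := by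
    rw [f_sum]
    refine sum_indicator_congr (fun v => ?_)
    rw [avoid_cons, cnt_cons, if_neg e1]
    constructor
    · rintro ⟨⟨hv, _⟩, hc⟩; exact ⟨hv, by omega⟩
    · rintro ⟨hv, hc⟩; exact ⟨⟨hv, fun h hp => n10 hp.1⟩, by omega⟩
  have h2 : (∑ v : Fin m → Fin 3,
      if Avoid (Fin.cons 2 v) ∧ cnt (Fin.cons 2 v) = t then 1 else 0) =
      (if t = 0 then 0 else f m (t-1)) := by
    split
    · next ht =>
      subst ht
      rw [sum_indicator_congr (P' := fun _ : Fin m → Fin 3 => False)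
        (fun v => by
          rw [avoid_cons, cnt_cons, if_pos rfl]
          exact ⟨fun ⟨_, hc⟩ => by omega, False.elim⟩)]
      simp
    · next ht =>
      rw [f_sum]
      refine sum_indicator_congr (fun v => ?_)
      rw [avoid_cons, cnt_cons, if_pos rfl]
      constructor
      · rintro ⟨⟨hv, _⟩, hc⟩; exact ⟨hv, by omega⟩
      · rintro ⟨hv, hc⟩; exact ⟨⟨hv, fun h hp => n20 hp.1⟩, by omega⟩
  rw [h0, h1, h2]

open Classical in
lemma g_succ (m t : ℕ) :
    g (m+1) t = g m t + (if t = 0 then 0 else f m (t-1)) := by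
  have e0 : ¬ ((0:Fin 3) = 2) := by decide
  have n20 : ¬ ((2:Fin 3) = 0) := by decide
  rw [g, card_succ, Fin.sum_univ_three]
  have h0 : (∑ v : Fin m → Fin 3,
      if (Avoid (Fin.cons 0 v) ∧ cnt (Fin.cons 0 v) = t) ∧
          ∀ h : 0 < m + 1, (Fin.cons 0 v : Fin (m+1) → Fin 3) ⟨0, h⟩ ≠ 1 then 1 else 0) =
      g m t := by
    rw [g_sum]
    refine sum_indicator_congr (fun v => ?_)
    rw [avoid_cons, cnt_cons, if_neg e0]
    simp only [cons_mk_zero]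
    constructor
    · rintro ⟨⟨⟨hv, hs⟩, hc⟩, _⟩; exact ⟨⟨hv, by omega⟩, fun h h1 => hs h ⟨by trivial, h1⟩⟩
    · rintro ⟨⟨hv, hc⟩, hs⟩
      exact ⟨⟨⟨hv, fun h hp => hs h hp.2⟩, by omega⟩, fun h => by decide⟩
  have h1 : (∑ v : Fin m → Fin 3,
      if (Avoid (Fin.cons 1 v) ∧ cnt (Fin.cons 1 v) = t) ∧
          ∀ h : 0 < m + 1, (Fin.cons 1 v : Fin (m+1) → Fin 3) ⟨0, h⟩ ≠ 1 then 1 else 0) = 0 := by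
    rw [sum_indicator_congr (P' := fun _ : Fin m → Fin 3 => False)
      (fun v => by
        simp only [cons_mk_zero]
        exact ⟨fun ⟨_, hs⟩ => hs (by omega) rfl, False.elim⟩)]
    simp
  have h2 : (∑ v : Fin m → Fin 3,
      if (Avoid (Fin.cons 2 v) ∧ cnt (Fin.cons 2 v) = t) ∧
          ∀ h : 0 < m + 1, (Fin.cons 2 v : Fin (m+1) → Fin 3) ⟨0, h⟩ ≠ 1 then 1 else 0) =
      (if t = 0 then 0 else f m (t-1)) := by
    split
    · next ht =>
      subst ht
      rw [sum_indicator_congr (P' := fun _ : Fin m → Fin 3 => False)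
        (fun v => by
          rw [avoid_cons, cnt_cons, if_pos rfl]
          exact ⟨fun ⟨⟨_, hc⟩, _⟩ => by omega, False.elim⟩)]
      simp
    · next ht =>
      rw [f_sum]
      refine sum_indicator_congr (fun v => ?_)
      rw [avoid_cons, cnt_cons, if_pos rfl]
      simp only [cons_mk_zero]
      constructor
      · rintro ⟨⟨⟨hv, _⟩, hc⟩, _⟩; exact ⟨hv, by omega⟩
      · rintro ⟨hv, hc⟩
        exact ⟨⟨⟨hv, fun h hp => n20 hp.1⟩, by omega⟩, fun h => by decide⟩
  rw [h0, h1, h2]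
  omega

lemma fg : ∀ m t : ℕ, f m t = (m + t + 1).choose (2*t+1) ∧ g m t = (m + t).choose (2*t) := by
  intro m
  induction m with
  | zero =>
    intro t
    cases t with
    | zero => simp [f_zero, g_zero]
    | succ t =>
      rw [f_zero, g_zero]
      simp only [Nat.succ_ne_zero, if_false]
      constructor
      · exact (Nat.choose_eq_zero_of_lt (by omega)).symm
      · exact (Nat.choose_eq_zero_of_lt (by omega)).symm
  | succ m ih =>
    intro t
    cases t with
    | zero =>
      have hf := (ih 0).1
      have hg := (ih 0).2
      rw [f_succ, g_succ, hf, hg]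
      simp [Nat.choose]
    | succ t =>
      have h1 := (ih t).1
      have h2 := (ih (t+1)).1
      have h3 := (ih (t+1)).2
      rw [f_succ, g_succ, h2, h3]
      simp only [Nat.succ_ne_zero, if_false, Nat.add_sub_cancel]
      rw [h1]
      have e1 : m + (t+1) + 1 = m + t + 2 := by omega
      have e2 : m + (t+1) = m + t + 1 := by omega
      have e3 : 2*(t+1)+1 = 2*t+3 := by omega
      have e4 : 2*(t+1) = 2*t+2 := by omega
      have e5 : m + 1 + (t+1) + 1 = m + t + 3 := by omega
      have e6 : m + 1 + (t+1) = m + t + 2 := by omega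
      rw [e1, e2, e3, e4, e5, e6]
      have p1 : (m+t+2).choose (2*t+2) = (m+t+1).choose (2*t+1) + (m+t+1).choose (2*t+2) := by
        rw [show m+t+2 = (m+t+1)+1 from rfl, show 2*t+2 = (2*t+1)+1 from rfl]
        exact Nat.choose_succ_succ _ _
      have p2 : (m+t+3).choose (2*t+3) = (m+t+2).choose (2*t+2) + (m+t+2).choose (2*t+3) := by
        rw [show m+t+3 = (m+t+2)+1 from rfl, show 2*t+3 = (2*t+2)+1 from rfl]
        exact Nat.choose_succ_succ _ _
      constructor
      · rw [p2, p1]; ring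
      · rw [p1]; ring

open Classical in
noncomputable def fb (N r : ℕ) : ℕ :=
  (univ.filter fun w : Fin N → Bool =>
    (univ.filter fun i => w i = false).card = r).card

open Classical in
lemma fb_sum (N r : ℕ) :
    fb N r = ∑ v : Fin N → Bool,
      if (univ.filter fun i => v i = false).card = r then 1 else 0 := by
  rw [fb, Finset.card_filter]

lemma cntb_cons {N : ℕ} (a : Bool) (v : Fin N → Bool) :
    (univ.filter fun i : Fin (N+1) => (Fin.cons a v : Fin (N+1) → Bool) i = false).card
      = (if a = false then 1 else 0) + (univ.filter fun i => v i = false).card := by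
  classical
  simp only [Finset.card_filter, Fin.sum_univ_succ, Fin.cons_zero, Fin.cons_succ]

lemma fb_eq : ∀ N r : ℕ, fb N r = N.choose r := by
  intro N
  induction N with
  | zero =>
    intro r
    cases r with
    | zero =>
      rw [fb_sum]
      rw [sum_indicator_congr (P' := fun _ : Fin 0 → Bool => True) (fun v => by simp)]
      simp
    | succ r =>
      rw [fb_sum]
      rw [sum_indicator_congr (P' := fun _ : Fin 0 → Bool => False) (fun v => by simp)]
      simp
  | succ N ih =>
    intro r
    rw [fb, card_succ, Fintype.sum_bool]
    have ht : (∑ v : Fin N → Bool,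
        if (univ.filter fun i : Fin (N+1) =>
            (Fin.cons true v : Fin (N+1) → Bool) i = false).card = r then 1 else 0) = fb N r := by
      rw [fb_sum]
      refine sum_indicator_congr (fun v => ?_)
      rw [cntb_cons]
      simp
    cases r with
    | zero =>
      have hf : (∑ v : Fin N → Bool,
          if (univ.filter fun i : Fin (N+1) =>
              (Fin.cons false v : Fin (N+1) → Bool) i = false).card = 0 then 1 else 0) = 0 := by
        rw [sum_indicator_congr (P' := fun _ : Fin N → Bool => False)
          (fun v => by rw [cntb_cons]; simp)]
        simp
      rw [ht, hf, ih]
      simp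
    | succ r =>
      have hf : (∑ v : Fin N → Bool,
          if (univ.filter fun i : Fin (N+1) =>
              (Fin.cons false v : Fin (N+1) → Bool) i = false).card = r + 1 then 1 else 0) =
          fb N r := by
        rw [fb_sum]
        refine sum_indicator_congr (fun v => ?_)
        rw [cntb_cons]
        simp only [if_pos rfl, if_true]
        omega
      rw [ht, hf, ih, ih, Nat.choose_succ_succ]
      simp only [Nat.succ_eq_add_one]
      omega

open Classical in
theorem stmt17 (n k : ℕ) (hk : 1 ≤ k) (hkn : k ≤ n) :
    (Finset.univ.filter fun w : Fin (n - 1) → Fin 3 =>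
        (∀ i : ℕ, (h : i + 1 < n - 1) → ¬ (w ⟨i, by omega⟩ = 0 ∧ w ⟨i + 1, h⟩ = 1)) ∧
        (Finset.univ.filter fun i => w i = 2).card = k - 1).card =
      (n + k - 1).choose (2 * k - 1) ∧
    (Finset.univ.filter fun w : Fin (n - 1) → Fin 3 =>
        (∀ i : ℕ, (h : i + 1 < n - 1) → ¬ (w ⟨i, by omega⟩ = 0 ∧ w ⟨i + 1, h⟩ = 1)) ∧
        (Finset.univ.filter fun i => w i = 2).card = k - 1).card =
      (Finset.univ.filter fun w : Fin (n + k - 1) → Bool =>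
        (Finset.univ.filter fun i => w i = false).card = 2 * k - 1).card := by
  have h1 := (fg (n-1) (k-1)).1
  have e1 : n - 1 + (k-1) + 1 = n + k - 1 := by omega
  have e2 : 2*(k-1)+1 = 2*k-1 := by omega
  rw [e1, e2] at h1
  have key1 : (Finset.univ.filter fun w : Fin (n - 1) → Fin 3 =>
        (∀ i : ℕ, (h : i + 1 < n - 1) → ¬ (w ⟨i, by omega⟩ = 0 ∧ w ⟨i + 1, h⟩ = 1)) ∧
        (Finset.univ.filter fun i => w i = 2).card = k - 1).card = f (n-1) (k-1) := rfl
  have key2 : (Finset.univ.filter fun w : Fin (n + k - 1) → Bool =>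
        (Finset.univ.filter fun i => w i = false).card = 2 * k - 1).card
      = fb (n+k-1) (2*k-1) := rfl
  refine ⟨?_, ?_⟩
  · rw [key1, h1]
  · rw [key1, key2, h1, fb_eq]
end
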